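/- arXiv:2502.07681 — 6 statements merged into one kernel-verified Lean document; each statement's English description precedes it below -/
import Mathlib

section
/- For every Boolean ring R, the map σ : R → 𝔹(Spec(R)) sending a to the function 𝔭 ↦ 0 if a ∈ 𝔭 and 1 if a ∉ 𝔭 is a ring isomorphism, where 𝔹(X) denotes the ring of continuous functions from X to the discrete field 𝔽₂. -/
/-!
Idempotents of a commutative ring `R` correspond to clopen subsets of `Spec R` via
`e ↦ D(e)`. In a Boolean ring every element is idempotent and every residue ring `R ⧸ 𝔭` is
`𝔽₂`, so `σ a` is the indicator function of the clopen set `D(a)`: it is continuous, it is a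
ring homomorphism because each `a ↦ a mod 𝔭` is, it is surjective because every clopen set is
some `D(e)`, and it is injective because an element lying in every prime is nilpotent, hence
zero.
-/

instance : TopologicalSpace (ZMod 2) := ⊥
instance : DiscreteTopology (ZMod 2) := ⟨rfl⟩

attribute [local instance] Classical.propDecidable

section BooleanRing

variable {R : Type*} [CommRing R]

lemma IsIdempotentElem.notMem_iff_one_sub_mem {e : R} (he : IsIdempotentElem e)
    {I : Ideal R} [hI : I.IsPrime] : e ∉ I ↔ 1 - e ∈ I := by
  constructor
  · intro heI
    have hprod : e * (1 - e) ∈ I := by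
      rw [mul_sub, mul_one, he.eq, sub_self]
      exact I.zero_mem
    exact (hI.mem_or_mem hprod).resolve_left heI
  · intro h1e heI
    exact hI.ne_top (I.eq_top_of_isUnit_mem (by simpa using I.add_mem heI h1e) isUnit_one)

lemma add_self_eq_zero_of_forall_isIdempotentElem (h : ∀ x : R, IsIdempotentElem x) (a : R) :
    a + a = 0 := by
  linear_combination (h (a + a)).eq - 4 * (h a).eq

lemma Ideal.IsPrime.add_mem_iff_of_forall_isIdempotentElem (h : ∀ x : R, IsIdempotentElem x)
    {I : Ideal R} [I.IsPrime] {a b : R} : a + b ∈ I ↔ (a ∈ I ↔ b ∈ I) := by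
  by_cases ha : a ∈ I
  · simp [I.add_mem_iff_right ha, ha]
  by_cases hb : b ∈ I
  · simp [I.add_mem_iff_left hb, ha, hb]
  simp only [ha, hb, iff_self, iff_true]
  -- `a + b = a - b` in characteristic two, and `a ≡ 1 ≡ b` modulo `I`
  have hab : a + b = (1 - b) - (1 - a) + (b + b) := by ring
  rw [hab, add_self_eq_zero_of_forall_isIdempotentElem h, add_zero]
  exact I.sub_mem ((h b).notMem_iff_one_sub_mem.mp hb) ((h a).notMem_iff_one_sub_mem.mp ha)

/-- The residue map `R → R ⧸ I ≅ 𝔽₂` at a prime `I` of a Boolean ring. -/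
noncomputable def residueZModTwo (h : ∀ x : R, IsIdempotentElem x) (I : Ideal R)
    [hI : I.IsPrime] : R →+* ZMod 2 where
  toFun a := if a ∈ I then 0 else 1
  map_one' := by simp [hI.one_notMem]
  map_mul' a b := by
    by_cases ha : a ∈ I <;> by_cases hb : b ∈ I <;> simp [hI.mul_mem_iff_mem_or_mem, ha, hb]
  map_zero' := by simp
  map_add' a b := by
    by_cases ha : a ∈ I <;> by_cases hb : b ∈ I <;>
      simp +decide [hI.add_mem_iff_of_forall_isIdempotentElem h, ha, hb]

lemma PrimeSpectrum.isClopen_setOf_mem_of_isIdempotentElem {e : R} (he : IsIdempotentElem e) :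
    IsClopen {p : PrimeSpectrum R | e ∈ p.asIdeal} :=
  isClopen_iff_zeroLocus.mpr ⟨e, he, by ext; simp⟩

lemma PrimeSpectrum.continuous_ite_mem_of_isIdempotentElem {X : Type*} [TopologicalSpace X]
    {e : R} (he : IsIdempotentElem e) (x y : X) :
    Continuous fun p : PrimeSpectrum R => if e ∈ p.asIdeal then x else y :=
  continuous_const.if (by simp [(isClopen_setOf_mem_of_isIdempotentElem he).frontier_eq])
    continuous_const

/-- The map `σ : R → 𝔹(Spec R)` of a Boolean ring. -/
noncomputable def booleanSigma (h : ∀ x : R, IsIdempotentElem x) :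
    R →+* C(PrimeSpectrum R, ZMod 2) where
  toFun a := ⟨fun p => residueZModTwo h p.asIdeal a,
    PrimeSpectrum.continuous_ite_mem_of_isIdempotentElem (h a) 0 1⟩
  map_one' := by ext p; exact map_one (residueZModTwo h p.asIdeal)
  map_mul' a b := by ext p; exact map_mul (residueZModTwo h p.asIdeal) a b
  map_zero' := by ext p; exact map_zero (residueZModTwo h p.asIdeal)
  map_add' a b := by ext p; exact map_add (residueZModTwo h p.asIdeal) a b

lemma booleanSigma_apply (h : ∀ x : R, IsIdempotentElem x) (a : R) (p : PrimeSpectrum R) :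
    booleanSigma h a p = if a ∈ p.asIdeal then 0 else 1 :=
  rfl

lemma booleanSigma_injective (h : ∀ x : R, IsIdempotentElem x) :
    Function.Injective (booleanSigma h) := by
  rw [injective_iff_map_eq_zero]
  intro a ha
  have hmem : ∀ I : Ideal R, I.IsPrime → a ∈ I := by
    intro I hI
    have hp := DFunLike.congr_fun ha ⟨I, hI⟩
    rw [booleanSigma_apply] at hp
    by_contra haI
    simp [haI] at hp
  exact (h a).eq_zero_of_isNilpotent (nilpotent_iff_mem_prime.mpr hmem)

lemma ZMod.two_eq_ite (x : ZMod 2) : x = if x = 0 then 0 else 1 := by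
  revert x; decide

lemma booleanSigma_surjective (h : ∀ x : R, IsIdempotentElem x) :
    Function.Surjective (booleanSigma h) := by
  intro f
  obtain ⟨e, -, hfe⟩ := PrimeSpectrum.isClopen_iff_zeroLocus.mp
    ((isClopen_discrete {(0 : ZMod 2)}).preimage f.continuous)
  refine ⟨e, ContinuousMap.ext fun p => ?_⟩
  have hzero : f p = 0 ↔ e ∈ p.asIdeal := by
    simpa using congrArg (p ∈ ·) hfe
  rw [booleanSigma_apply, ZMod.two_eq_ite (f p), if_congr hzero rfl rfl]

end BooleanRing

/-- For a Boolean ring `R`, the map `σ : R → 𝔹(Spec R)`, sending `a` to the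
function `𝔭 ↦ 0` if `a ∈ 𝔭` and `1` otherwise, is a ring isomorphism. -/
theorem boolean_sigma_ringIso (R : Type*) [CommRing R] (hB : ∀ x : R, x * x = x) :
    ∃ e : R ≃+* C(PrimeSpectrum R, ZMod 2),
      ∀ (a : R) (p : PrimeSpectrum R),
        e a p = if a ∈ p.asIdeal then 0 else 1 :=
  ⟨.ofBijective (booleanSigma hB) ⟨booleanSigma_injective hB, booleanSigma_surjective hB⟩,
    booleanSigma_apply hB⟩
end

section
/- Let X be a compact and totally separated topological space. Then the map β : X → Spec(𝔹(X)) sending a point p to the maximal ideal {f ∈ 𝔹(X) : f(p) = 0} is a homeomorphism. -/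
/-! Every element of `C(X, ZMod 2)` is idempotent, so each basic open set `D(f)` of its spectrum is
clopen with complement `D(1 - f)`, and the spectrum is totally separated, in particular Hausdorff.
The map `β` is continuous because `β⁻¹ D(f) = {f ≠ 0}`, injective because indicator functions of
clopen sets separate points, and has dense range because a nonempty `D(f)` forces `f ≠ 0`, so
`β p ∈ D(f)` for any `p` with `f p ≠ 0`. For compact `X` the range is also closed, hence `β` is a
continuous bijection from a compact space onto a Hausdorff space. -/

open PrimeSpectrum

theorem PrimeSpectrum.totallySeparatedSpace_of_forall_isIdempotentElem {R : Type*} [CommRing R]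
    (h : ∀ a : R, IsIdempotentElem a) : TotallySeparatedSpace (PrimeSpectrum R) := by
  have hclopen (f : R) : IsClopen (basicOpen f : Set (PrimeSpectrum R)) :=
    isClopen_basicOpen_of_mul_add f (1 - f) (by rw [mul_sub, mul_one, (h f).eq, sub_self])
      (add_sub_cancel f 1)
  rw [totallySeparatedSpace_iff_exists_isClopen]
  intro P Q hPQ
  obtain ⟨f, hf⟩ : ∃ f, ¬(f ∈ P.asIdeal ↔ f ∈ Q.asIdeal) := by
    by_contra! H
    exact hPQ (PrimeSpectrum.ext (Ideal.ext H))
  by_cases hP : f ∈ P.asIdeal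
  · have hQ : f ∉ Q.asIdeal := fun hQ => hf (iff_of_true hP hQ)
    exact ⟨(basicOpen f)ᶜ, (hclopen f).compl, not_not_intro hP, not_not_intro hQ⟩
  · have hQ : f ∈ Q.asIdeal := by_contra fun hQ => hf (iff_of_false hP hQ)
    exact ⟨basicOpen f, hclopen f, hP, not_not_intro hQ⟩

namespace ContinuousMap

section PrimeOfPoint

variable {X : Type*} (R : Type*) [TopologicalSpace X] [CommSemiring R] [IsDomain R]
  [TopologicalSpace R] [IsTopologicalSemiring R]

/-- The map `β`. -/
def primeOfPoint (p : X) : PrimeSpectrum C(X, R) :=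
  ⟨RingHom.ker (evalAlgHom R R p), RingHom.ker_isPrime _⟩

variable {R}

@[simp]
theorem mem_primeOfPoint {p : X} {f : C(X, R)} : f ∈ (primeOfPoint R p).asIdeal ↔ f p = 0 :=
  Iff.rfl

theorem primeOfPoint_mem_basicOpen {p : X} {f : C(X, R)} :
    primeOfPoint R p ∈ basicOpen f ↔ f p ≠ 0 :=
  mem_primeOfPoint.not

theorem continuous_primeOfPoint [T1Space R] : Continuous (primeOfPoint (X := X) R) := by
  rw [isTopologicalBasis_basic_opens.continuous_iff, Set.forall_mem_range]
  intro f
  exact isOpen_compl_singleton.preimage f.continuous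

theorem denseRange_primeOfPoint : DenseRange (primeOfPoint (X := X) R) := by
  rw [DenseRange, isTopologicalBasis_basic_opens.dense_iff, Set.forall_mem_range]
  rintro f ⟨P, hP⟩
  obtain ⟨p, hp⟩ : ∃ p, f p ≠ 0 := by
    by_contra! H
    have : basicOpen f = ⊥ := by rw [show f = 0 from ext H, basicOpen_zero]
    exact absurd hP (by simp [this])
  exact ⟨primeOfPoint R p, primeOfPoint_mem_basicOpen.mpr hp, p, rfl⟩

theorem primeOfPoint_surjective [CompactSpace X] [T1Space R] [T2Space (PrimeSpectrum C(X, R))] :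
    Function.Surjective (primeOfPoint (X := X) R) := by
  have hclosed := (continuous_primeOfPoint (X := X) (R := R)).isClosedMap.isClosed_range
  rw [← Set.range_eq_univ, ← hclosed.closure_eq]
  exact denseRange_primeOfPoint.closure_range

theorem primeOfPoint_injective [TotallySeparatedSpace X] :
    Function.Injective (primeOfPoint (X := X) R) := by
  intro p q hpq
  by_contra hne
  obtain ⟨U, hU, hp, hq⟩ := exists_isClopen_of_totally_separated hne
  let f : C(X, R) := LocallyConstant.charFn R hU
  have hf : ⇑f = U.indicator 1 := LocallyConstant.coe_charFn R hU
  have hfq : f ∈ (primeOfPoint R q).asIdeal := by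
    simpa [hf] using hq
  rw [← hpq, mem_primeOfPoint, hf, Set.indicator_of_mem hp] at hfq
  exact one_ne_zero hfq

end PrimeOfPoint

theorem isIdempotentElem_zmod_two {X : Type*} [TopologicalSpace X] (f : C(X, ZMod 2)) :
    IsIdempotentElem f := by
  ext x
  exact (by decide : ∀ a : ZMod 2, a * a = a) (f x)

end ContinuousMap

/-- For a compact totally separated space `X`, the map
`β : X → Spec 𝔹(X)`, `p ↦ {f | f p = 0}`, is a homeomorphism. -/
theorem beta_homeomorph (X : Type*) [TopologicalSpace X] [CompactSpace X]
    [TotallySeparatedSpace X] :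
    ∃ e : X ≃ₜ PrimeSpectrum C(X, ZMod 2),
      ∀ (p : X) (f : C(X, ZMod 2)), f ∈ (e p).asIdeal ↔ f p = 0 := by
  have := totallySeparatedSpace_of_forall_isIdempotentElem
    (ContinuousMap.isIdempotentElem_zmod_two (X := X))
  let β := Equiv.ofBijective _ ⟨ContinuousMap.primeOfPoint_injective,
    ContinuousMap.primeOfPoint_surjective (X := X) (R := ZMod 2)⟩
  exact ⟨ContinuousMap.continuous_primeOfPoint.homeoOfEquivCompactToT2 (f := β), fun _ _ => Iff.rfl⟩
end

section
/- For every topological space X, the profinite completion map u_X : X → X̂ induces a homeomorphism X̂ ≅ Spec(𝔹(X)), i.e., the unique continuous map β̂ : X̂ → Spec(𝔹(X)) with β = β̂ ∘ u_X is a homeomorphism. -/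
/-- The collection of clopen equivalence relations `r` on `X` whose quotient
`X/r` is finite and discrete. -/
abbrev FinClopenSetoid (X : Type) [TopologicalSpace X] : Type :=
  {r : Setoid X // IsClopen {p : X × X | r.r p.1 p.2} ∧ Finite (Quotient r) ∧
    DiscreteTopology (Quotient r)}

/-- The profinite completion of a topological space `X`: the projective limit of
the finite discrete quotients `X/r` over all clopen equivalence relations `r`
with finite discrete quotient. -/
abbrev ProfiniteCompletion (X : Type) [TopologicalSpace X] : Type :=
  {f : ∀ r : FinClopenSetoid X, Quotient r.1 //
    ∀ (r s : FinClopenSetoid X), r.1 ≤ s.1 →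
      ∀ x : X, f r = Quotient.mk r.1 x → f s = Quotient.mk s.1 x}

/-- The canonical continuous map `u_X : X → X̂`. -/
def uX (X : Type) [TopologicalSpace X] : X → ProfiniteCompletion X :=
  fun x => ⟨fun r => Quotient.mk r.1 x, by
    intro r s h y hy
    exact Quotient.sound (h (Quotient.exact hy))⟩

/-!
A point `z` of `X̂` evaluates every `f : C(X, 𝔽₂)`: `f` factors through the finite discrete
quotient `X / ker f`, of which `z` picks a class. Since `z` is compatible with refinement,
evaluation at `z` commutes with post-composition, so it is a ring homomorphism; its kernel is the
prime `β̂ z`. Conversely, the indicators of the classes of a finite clopen partition are orthogonal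
idempotents summing to `1`, so a prime `P` misses exactly one of them; these choices form a point
of `X̂`. The two maps are inverse to each other, and both are continuous because basic opens
correspond to single coordinates. Uniqueness holds since `X̂`, a subspace of a product of discrete
spaces, is Hausdorff and `u_X` has dense image.
-/

theorem Ideal.IsPrime.existsUnique_notMem_of_sum_eq_one {R ι : Type*} [CommSemiring R]
    [Fintype ι] {P : Ideal R} (hP : P.IsPrime) {e : ι → R} (hsum : ∑ i, e i = 1)
    (horth : Pairwise fun i j => e i * e j = 0) : ∃! i, e i ∉ P := by
  obtain ⟨i, hi⟩ : ∃ i, e i ∉ P := by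
    by_contra! h
    exact hP.ne_top ((P.eq_top_iff_one).2 (hsum ▸ P.sum_mem fun i _ => h i))
  refine ⟨i, hi, fun j hj => by_contra fun hji => ?_⟩
  rcases hP.mem_or_mem (show e j * e i ∈ P from horth hji ▸ P.zero_mem) with h | h
  exacts [hj h, hi h]

theorem ContinuousMap.const_mem_iff {X K : Type*} [TopologicalSpace X] [DivisionSemiring K]
    [TopologicalSpace K] [IsTopologicalSemiring K] {P : Ideal C(X, K)} (hP : P ≠ ⊤) (c : K) :
    ContinuousMap.const X c ∈ P ↔ c = 0 := by
  refine ⟨fun h => by_contra fun hc => hP ?_, fun h => h ▸ P.zero_mem⟩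
  have hunit : ContinuousMap.const X c⁻¹ * ContinuousMap.const X c = 1 := by
    ext
    simp [hc]
  exact P.eq_top_iff_one.2 (hunit ▸ P.mul_mem_left _ h)

open scoped Classical

namespace FinClopenSetoid

variable {X : Type} [TopologicalSpace X]

instance (r : FinClopenSetoid X) : Finite (Quotient r.1) := r.2.2.1

instance (r : FinClopenSetoid X) : DiscreteTopology (Quotient r.1) := r.2.2.2

def ker {Y : Type*} [TopologicalSpace Y] [DiscreteTopology Y] [Finite Y] (f : C(X, Y)) :
    FinClopenSetoid X :=
  ⟨Setoid.ker f,
    (isClopen_discrete {q : Y × Y | q.1 = q.2}).preimage (f.continuous.prodMap f.continuous),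
    Finite.of_injective _ (Setoid.kerLift_injective f),
    .of_continuous_injective (f.continuous.quotient_lift _) (Setoid.kerLift_injective f)⟩

def proj (r : FinClopenSetoid X) : C(X, Quotient r.1) :=
  ⟨Quotient.mk r.1, continuous_quotient_mk'⟩

variable {K : Type*} [CommSemiring K] [TopologicalSpace K]

noncomputable def indicator (r : FinClopenSetoid X) (q : Quotient r.1) : C(X, K) :=
  (⟨fun p => if p = q then 1 else 0, continuous_of_discreteTopology⟩ : C(Quotient r.1, K)).comp
    (proj r)

theorem indicator_apply (r : FinClopenSetoid X) (q : Quotient r.1) (x : X) :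
    (indicator r q : C(X, K)) x = if Quotient.mk r.1 x = q then 1 else 0 :=
  rfl

variable [IsTopologicalSemiring K]

theorem sum_indicator (r : FinClopenSetoid X) [Fintype (Quotient r.1)] :
    ∑ q, (indicator r q : C(X, K)) = 1 := by
  ext x
  simp [indicator_apply]

theorem indicator_mul_indicator (r : FinClopenSetoid X) {q q' : Quotient r.1} (h : q ≠ q') :
    (indicator r q * indicator r q' : C(X, K)) = 0 := by
  ext x
  by_cases hx : Quotient.mk r.1 x = q <;> simp [indicator_apply, hx, h]

theorem indicator_mul_indicator_of_le {r s : FinClopenSetoid X} (hle : r.1 ≤ s.1) (x : X) :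
    (indicator r (Quotient.mk r.1 x) * indicator s (Quotient.mk s.1 x) : C(X, K)) =
      indicator r (Quotient.mk r.1 x) := by
  ext y
  by_cases hy : Quotient.mk r.1 y = Quotient.mk r.1 x
  · simp [indicator_apply, hy, Quotient.sound (hle (Quotient.exact hy))]
  · simp [indicator_apply, hy]

theorem existsUnique_indicator_notMem (P : PrimeSpectrum C(X, K)) (r : FinClopenSetoid X) :
    ∃! q, (indicator r q : C(X, K)) ∉ P.asIdeal :=
  have := Fintype.ofFinite (Quotient r.1)
  P.isPrime.existsUnique_notMem_of_sum_eq_one (sum_indicator r) fun _ _ =>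
    indicator_mul_indicator r

noncomputable def classOf (P : PrimeSpectrum C(X, K)) (r : FinClopenSetoid X) : Quotient r.1 :=
  (existsUnique_indicator_notMem P r).exists.choose

theorem classOf_eq_iff (P : PrimeSpectrum C(X, K)) (r : FinClopenSetoid X) {q : Quotient r.1} :
    classOf P r = q ↔ (indicator r q : C(X, K)) ∉ P.asIdeal :=
  have h := existsUnique_indicator_notMem P r
  ⟨fun hq => hq ▸ h.exists.choose_spec, h.unique h.exists.choose_spec⟩

end FinClopenSetoid

namespace ProfiniteCompletion

open FinClopenSetoid

variable {X : Type} [TopologicalSpace X]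
  {Y Z : Type*} [TopologicalSpace Y] [DiscreteTopology Y] [Finite Y]
  [TopologicalSpace Z] [DiscreteTopology Z] [Finite Z]

noncomputable def eval (z : ProfiniteCompletion X) (f : C(X, Y)) : Y :=
  Setoid.kerLift f (z.1 (ker f))

theorem eval_uX (x : X) (f : C(X, Y)) : (uX X x).eval f = f x :=
  rfl

theorem eval_eq_of_le (z : ProfiniteCompletion X) {f : C(X, Y)} {r : FinClopenSetoid X}
    (hle : r.1 ≤ Setoid.ker f) {x : X} (hx : z.1 r = Quotient.mk r.1 x) : z.eval f = f x := by
  rw [eval, z.2 r (ker f) hle x hx]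
  rfl

theorem exists_eval_eq (z : ProfiniteCompletion X) (f : C(X, Y)) : ∃ x, z.eval f = f x :=
  let ⟨x, hx⟩ := Quotient.exists_rep (z.1 (ker f))
  ⟨x, z.eval_eq_of_le le_rfl hx.symm⟩

theorem eval_of_mk_eq (z : ProfiniteCompletion X) (f : C(X, Y)) {x : X}
    (hx : Quotient.mk (ker f).1 x = z.1 (ker f)) : z.eval f = f x := by
  rw [eval, ← hx]
  rfl

theorem eval_comp (z : ProfiniteCompletion X) (f : C(X, Y)) (g : C(Y, Z)) :
    z.eval (g.comp f) = g (z.eval f) := by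
  obtain ⟨x, hx⟩ := Quotient.exists_rep (z.1 (ker f))
  rw [z.eval_eq_of_le le_rfl hx.symm, z.eval_eq_of_le (fun _ _ h => congrArg g h) hx.symm]
  rfl

theorem eval_prodMk (z : ProfiniteCompletion X) (f : C(X, Y)) (g : C(X, Z)) :
    z.eval (f.prodMk g) = (z.eval f, z.eval g) :=
  Prod.ext (z.eval_comp (f.prodMk g) .fst).symm (z.eval_comp (f.prodMk g) .snd).symm

theorem eval_const (z : ProfiniteCompletion X) (c : Y) : z.eval (.const X c) = c :=
  let ⟨_, hx⟩ := z.exists_eval_eq (.const X c)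
  hx

theorem eval_proj (z : ProfiniteCompletion X) (r : FinClopenSetoid X) :
    z.eval (proj r) = z.1 r := by
  obtain ⟨x, hx⟩ := Quotient.exists_rep (z.1 r)
  rw [z.eval_eq_of_le (fun _ _ h => Quotient.sound h) hx.symm]
  exact hx

theorem continuous_eval (f : C(X, Y)) : Continuous fun z : ProfiniteCompletion X => z.eval f :=
  continuous_of_discreteTopology.comp ((continuous_apply (ker f)).comp continuous_subtype_val)

variable {R : Type*} [Semiring R] [TopologicalSpace R] [DiscreteTopology R] [Finite R]

noncomputable def evalRingHom (z : ProfiniteCompletion X) : C(X, R) →+* R where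
  toFun := z.eval
  map_one' := z.eval_const 1
  map_zero' := z.eval_const 0
  map_mul' f g := by
    change z.eval ((⟨fun p => p.1 * p.2, continuous_of_discreteTopology⟩ : C(R × R, R)).comp
      (f.prodMk g)) = _
    rw [eval_comp, eval_prodMk]
    rfl
  map_add' f g := by
    change z.eval ((⟨fun p => p.1 + p.2, continuous_of_discreteTopology⟩ : C(R × R, R)).comp
      (f.prodMk g)) = _
    rw [eval_comp, eval_prodMk]
    rfl

theorem denseRange_uX : DenseRange (uX X) := by
  intro z
  rw [mem_closure_iff]
  intro U hU hz
  obtain ⟨V, hV, rfl⟩ := isOpen_induced_iff.mp hU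
  obtain ⟨I, u, hu, hsub⟩ := isOpen_pi_iff.mp hV z.1 hz
  let F : C(X, ∀ i : I, Quotient i.1.1) := .pi fun i => proj i.1
  obtain ⟨x, hx⟩ := z.exists_eval_eq F
  refine ⟨uX X x, hsub fun r hr => ?_, x, rfl⟩
  have hzr : z.1 r = Quotient.mk r.1 x :=
    calc z.1 r = z.eval (proj r) := (eval_proj z r).symm
      _ = z.eval ((ContinuousMap.eval (⟨r, hr⟩ : I)).comp F) := rfl
      _ = Quotient.mk r.1 x := by rw [eval_comp, hx]; rfl
  show Quotient.mk r.1 x ∈ u r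
  exact hzr ▸ (hu r hr).2

section OfPrimeSpectrum

variable {K : Type*} [CommSemiring K] [TopologicalSpace K] [IsTopologicalSemiring K]

noncomputable def ofPrimeSpectrum (P : PrimeSpectrum C(X, K)) : ProfiniteCompletion X :=
  ⟨classOf P, fun r s hle x hx => (classOf_eq_iff P s).2 fun hs =>
    (classOf_eq_iff P r).1 hx
      (indicator_mul_indicator_of_le (K := K) hle x ▸ P.asIdeal.mul_mem_left _ hs)⟩

theorem continuous_ofPrimeSpectrum :
    Continuous (ofPrimeSpectrum : PrimeSpectrum C(X, K) → ProfiniteCompletion X) := by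
  refine (continuous_pi fun r => continuous_discrete_rng.2 fun q => ?_).subtype_mk _
  have hpre : (classOf · r) ⁻¹' {q} =
      (PrimeSpectrum.basicOpen (indicator r q : C(X, K)) : Set (PrimeSpectrum C(X, K))) :=
    Set.ext fun P => (classOf_eq_iff P r).trans (PrimeSpectrum.mem_basicOpen _ _).symm
  rw [hpre]
  exact (PrimeSpectrum.basicOpen _).isOpen

end OfPrimeSpectrum

variable {K : Type*} [Field K] [TopologicalSpace K] [DiscreteTopology K] [Finite K]

noncomputable def toPrimeSpectrum (z : ProfiniteCompletion X) : PrimeSpectrum C(X, K) :=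
  ⟨RingHom.ker z.evalRingHom, RingHom.ker_isPrime _⟩

theorem mem_toPrimeSpectrum {z : ProfiniteCompletion X} {f : C(X, K)} :
    f ∈ z.toPrimeSpectrum.asIdeal ↔ z.eval f = 0 :=
  RingHom.mem_ker

theorem eval_indicator (z : ProfiniteCompletion X) (r : FinClopenSetoid X) (q : Quotient r.1) :
    z.eval (indicator r q : C(X, K)) = if z.1 r = q then 1 else 0 := by
  rw [indicator, eval_comp, eval_proj]
  rfl

theorem mul_indicator_eq_const_mul (z : ProfiniteCompletion X) (f : C(X, K)) :
    f * indicator (ker f) (z.1 (ker f)) =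
      .const X (z.eval f) * indicator (ker f) (z.1 (ker f)) := by
  ext x
  by_cases hx : Quotient.mk (ker f).1 x = z.1 (ker f)
  · simp [indicator_apply, hx, z.eval_of_mk_eq f hx]
  · simp [indicator_apply, hx]

theorem ofPrimeSpectrum_toPrimeSpectrum (z : ProfiniteCompletion X) :
    ofPrimeSpectrum (z.toPrimeSpectrum : PrimeSpectrum C(X, K)) = z :=
  Subtype.ext <| funext fun r => (classOf_eq_iff _ r).2 <| by
    rw [mem_toPrimeSpectrum, eval_indicator, if_pos rfl]
    exact one_ne_zero

theorem toPrimeSpectrum_ofPrimeSpectrum (P : PrimeSpectrum C(X, K)) :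
    (ofPrimeSpectrum P).toPrimeSpectrum = P := by
  ext f
  set z := ofPrimeSpectrum P
  have he : indicator (ker f) (z.1 (ker f)) ∉ P.asIdeal := (classOf_eq_iff P _).1 rfl
  calc f ∈ z.toPrimeSpectrum.asIdeal
      ↔ ContinuousMap.const X (z.eval f) ∈ P.asIdeal := by
        rw [mem_toPrimeSpectrum, ContinuousMap.const_mem_iff P.isPrime.ne_top]
    _ ↔ f * indicator (ker f) (z.1 (ker f)) ∈ P.asIdeal := by
      rw [mul_indicator_eq_const_mul, P.isPrime.mul_mem_iff_mem_or_mem, or_iff_left he]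
    _ ↔ f ∈ P.asIdeal := by rw [P.isPrime.mul_mem_iff_mem_or_mem, or_iff_left he]

theorem continuous_toPrimeSpectrum :
    Continuous (toPrimeSpectrum : ProfiniteCompletion X → PrimeSpectrum C(X, K)) := by
  rw [PrimeSpectrum.isTopologicalBasis_basic_opens.continuous_iff]
  rintro _ ⟨f, rfl⟩
  exact (isOpen_discrete {0}ᶜ).preimage (continuous_eval f)

noncomputable def homeomorphPrimeSpectrum : ProfiniteCompletion X ≃ₜ PrimeSpectrum C(X, K) where
  toFun := toPrimeSpectrum
  invFun := ofPrimeSpectrum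
  left_inv := ofPrimeSpectrum_toPrimeSpectrum
  right_inv := toPrimeSpectrum_ofPrimeSpectrum
  continuous_toFun := continuous_toPrimeSpectrum
  continuous_invFun := continuous_ofPrimeSpectrum

end ProfiniteCompletion

/-- The unique continuous map `β̂ : X̂ → Spec 𝔹(X)` satisfying `β = β̂ ∘ u_X`,
where `β p` is the maximal ideal of functions vanishing at `p`, is a
homeomorphism; moreover any two continuous maps `X̂ → Spec 𝔹(X)` agreeing with
`β` on the image of `u_X` are equal. -/
theorem profiniteCompletion_homeo_spec (X : Type) [TopologicalSpace X] :
    (∃ e : ProfiniteCompletion X ≃ₜ PrimeSpectrum C(X, ZMod 2),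
        ∀ (x : X) (f : C(X, ZMod 2)), f ∈ (e (uX X x)).asIdeal ↔ f x = 0) ∧
    (∀ g₁ g₂ : C(ProfiniteCompletion X, PrimeSpectrum C(X, ZMod 2)),
        (∀ x : X, g₁ (uX X x) = g₂ (uX X x)) → g₁ = g₂) := by
  let e : ProfiniteCompletion X ≃ₜ PrimeSpectrum C(X, ZMod 2) :=
    ProfiniteCompletion.homeomorphPrimeSpectrum
  have : T2Space (PrimeSpectrum C(X, ZMod 2)) := e.symm.isEmbedding.t2Space
  refine ⟨⟨e, fun x f => ?_⟩, fun g₁ g₂ h => ?_⟩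
  · rw [← ProfiniteCompletion.eval_uX x f]
    exact ProfiniteCompletion.mem_toPrimeSpectrum
  · exact DFunLike.coe_injective <|
      ProfiniteCompletion.denseRange_uX.equalizer g₁.continuous g₂.continuous (funext h)
end

section
/- Let f : Y → X be a continuous map with X profinite, such that every x ∈ X has an open neighbourhood U for which the restriction f : f⁻¹(U) → U admits a continuous section. Then f admits a continuous section s : X → Y (with f ∘ s = id_X). -/
/-!
Shrink the local sections to a cover of `X` by pairwise disjoint clopen sets, which is possible
since `X` is profinite. Sections over disjoint open sets agree vacuously on overlaps, so they glue.
-/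

open Set TopologicalSpace Function Topology

section Sections

variable {X Y : Type*} [TopologicalSpace X] [TopologicalSpace Y]

def HasSectionOn (f : Y → X) (U : Set X) : Prop :=
  ∃ s : C(U, Y), ∀ u : U, f (s u) = u

theorem HasSectionOn.mono {f : Y → X} {U V : Set X} (hU : HasSectionOn f U) (hVU : V ⊆ U) :
    HasSectionOn f V :=
  let ⟨s, hs⟩ := hU
  ⟨s.comp ⟨inclusion hVU, continuous_inclusion hVU⟩, fun v ↦ hs (inclusion hVU v)⟩

theorem exists_section_of_pairwiseDisjoint_open_cover {ι : Type*} {f : Y → X} {W : ι → Set X}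
    (hW_open : ∀ i, IsOpen (W i)) (hW_disj : Pairwise (Disjoint on W))
    (hW_cover : univ ⊆ ⋃ i, W i) (hW : ∀ i, HasSectionOn f (W i)) :
    ∃ s : C(X, Y), ∀ x, f (s x) = x := by
  choose σ hσ using hW
  have hagree : ∀ i j x (hxi : x ∈ W i) (hxj : x ∈ W j), σ i ⟨x, hxi⟩ = σ j ⟨x, hxj⟩ := by
    intro i j x hxi hxj
    obtain rfl : i = j := hW_disj.eq (not_disjoint_iff.2 ⟨x, hxi, hxj⟩)
    rfl
  have hnhds : ∀ x, ∃ i, W i ∈ 𝓝 x := fun x ↦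
    let ⟨i, hxi⟩ := mem_iUnion.1 (hW_cover (mem_univ x))
    ⟨i, (hW_open i).mem_nhds hxi⟩
  refine ⟨ContinuousMap.liftCover W σ hagree hnhds, fun x ↦ ?_⟩
  obtain ⟨i, hxi⟩ := mem_iUnion.1 (hW_cover (mem_univ x))
  rw [ContinuousMap.liftCover_coe (i := i) ⟨x, hxi⟩]
  exact hσ i ⟨x, hxi⟩

end Sections

theorem profinite_section_of_local_sections_general (X Y : Type*) [TopologicalSpace X]
    [TopologicalSpace Y] [CompactSpace X] [T2Space X] [TotallyDisconnectedSpace X]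
    (f : Y → X)
    (hloc : ∀ x : X, ∃ U : Set X, IsOpen U ∧ x ∈ U ∧
      ∃ s : C(U, Y), ∀ u : U, f (s u) = (u : X)) :
    ∃ s : C(X, Y), ∀ x : X, f (s x) = x := by
  choose U hU_open hxU hU using hloc
  have hcover : IsOpenCover fun x ↦ (⟨U x, hU_open x⟩ : Opens X) :=
    .of_sets hU_open (eq_univ_of_forall fun x ↦ mem_iUnion.2 ⟨x, hxU x⟩)
  obtain ⟨n, W, hWU, hW_cover, hW_disj⟩ := hcover.exists_finite_nonempty_disjoint_clopen_cover
  refine exists_section_of_pairwiseDisjoint_open_cover (W := fun j ↦ (W j : Set X))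
    (fun j ↦ (W j).isOpen) (fun i j hij ↦ Clopens.coe_disjoint.2 (hW_disj hij)) hW_cover
    fun j ↦ ?_
  obtain ⟨x, hWx⟩ := (hWU j).2
  exact HasSectionOn.mono (hU x) hWx

/-- If `f : Y → X` is continuous, `X` is profinite, and every point of `X` has
an open neighbourhood over which `f` has a continuous section, then `f` has a
continuous section. -/
theorem profinite_section_of_local_sections (X Y : Type*) [TopologicalSpace X]
    [TopologicalSpace Y] [CompactSpace X] [T2Space X] [TotallyDisconnectedSpace X]
    (f : Y → X) (hf : Continuous f)
    (hloc : ∀ x : X, ∃ U : Set X, IsOpen U ∧ x ∈ U ∧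
      ∃ s : C(U, Y), ∀ u : U, f (s u) = (u : X)) :
    ∃ s : C(X, Y), ∀ x : X, f (s x) = x :=
  profinite_section_of_local_sections_general X Y f hloc
end

section
/- Let G be a finite group, X a Hausdorff space, and f : Y → X a profinite principal G-bundle over X (Y profinite, G acting freely and continuously on Y, f surjective, continuous, G-invariant, and each fibre f⁻¹(x) is a G-orbit). Then f admits a continuous section s : X → Y. -/
/-!
Freeness and total separatedness give every point a clopen neighbourhood meeting each
orbit at most once. Finitely many of them cover `Y`, and adding them one at a time, each
with the saturation of what has been chosen so far removed, yields a clopen fundamental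
domain `S`. Then `f` restricts to a continuous bijection from the compact space `S` onto the
Hausdorff space `X`, hence a homeomorphism, whose inverse is the section.
-/

open Set

section

variable (G : Type*) {Y : Type*} [Group G] [MulAction G Y]

def MeetsOrbitsAtMostOnce (S : Set Y) : Prop :=
  ∀ g : G, ∀ y ∈ S, g • y ∈ S → g • y = y

variable {G}

theorem meetsOrbitsAtMostOnce_union_diff_saturation {S U : Set Y}
    (hS : MeetsOrbitsAtMostOnce G S) (hU : MeetsOrbitsAtMostOnce G U) :
    MeetsOrbitsAtMostOnce G (S ∪ (U \ {y | ∃ g : G, g • y ∈ S})) := by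
  rintro g y (hyS | ⟨hyU, hyT⟩) (hgyS | ⟨hgyU, hgyT⟩)
  · exact hS g y hyS hgyS
  · exact absurd ⟨g⁻¹, by rwa [inv_smul_smul]⟩ hgyT
  · exact absurd ⟨g, hgyS⟩ hyT
  · exact hU g y hyU hgyU

variable [TopologicalSpace Y] [ContinuousConstSMul G Y]

theorem isClopen_setOf_exists_smul_mem [Finite G] {S : Set Y} (hS : IsClopen S) :
    IsClopen {y | ∃ g : G, g • y ∈ S} := by
  have hunion : {y | ∃ g : G, g • y ∈ S} = ⋃ g : G, (g • ·) ⁻¹' S := by ext; simp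
  rw [hunion]
  exact isClopen_iUnion_of_finite fun g => hS.preimage (continuous_const_smul g)

theorem exists_isClopen_mem_meetsOrbitsAtMostOnce [Finite G] [TotallySeparatedSpace Y]
    (hfree : ∀ (g : G) (y : Y), g • y = y → g = 1) (y : Y) :
    ∃ U : Set Y, IsClopen U ∧ y ∈ U ∧ MeetsOrbitsAtMostOnce G U := by
  have separate : ∀ g : G, g ≠ 1 → ∃ W : Set Y, IsClopen W ∧ y ∈ W ∧ ∀ u ∈ W, g • u ∉ W := by
    intro g hg
    obtain ⟨W, hW, hyW, hgyW⟩ :=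
      exists_isClopen_of_totally_separated fun h => hg (hfree g y h.symm)
    exact ⟨W ∩ (g • ·) ⁻¹' Wᶜ, hW.inter (hW.compl.preimage (continuous_const_smul g)),
      ⟨hyW, hgyW⟩, fun u hu hgu => hu.2 hgu.1⟩
  choose W hWclopen hyW hWsep using separate
  refine ⟨⋂ (g : G) (hg : g ≠ 1), W g hg,
    isClopen_iInter_of_finite fun g => isClopen_iInter_of_finite (hWclopen g),
    mem_iInter₂.2 hyW, fun g u hu hgu => ?_⟩
  by_cases hg : g = 1
  · rw [hg, one_smul]
  · exact absurd (mem_iInter₂.1 hgu g hg) (hWsep g hg u (mem_iInter₂.1 hu g hg))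

theorem exists_isClopen_meetsOrbitsAtMostOnce_saturating [Finite G] {ι : Type*}
    {U : ι → Set Y} (hUclopen : ∀ i, IsClopen (U i))
    (hUonce : ∀ i, MeetsOrbitsAtMostOnce G (U i)) (s : Finset ι) :
    ∃ S : Set Y, IsClopen S ∧ MeetsOrbitsAtMostOnce G S ∧
      ∀ i ∈ s, ∀ y ∈ U i, ∃ g : G, g • y ∈ S := by
  classical
  induction s using Finset.induction_on with
  | empty => exact ⟨∅, isClopen_empty, fun _ _ h => h.elim, by simp⟩
  | insert i s _ ih =>
    obtain ⟨S, hSclopen, hSonce, hScover⟩ := ih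
    set T := {y | ∃ g : G, g • y ∈ S}
    refine ⟨S ∪ (U i \ T),
      hSclopen.union ((hUclopen i).diff (isClopen_setOf_exists_smul_mem hSclopen)),
      meetsOrbitsAtMostOnce_union_diff_saturation hSonce (hUonce i), ?_⟩
    have hT : ∀ y ∈ T, ∃ g : G, g • y ∈ S ∪ (U i \ T) :=
      fun y ⟨g, hg⟩ => ⟨g, Or.inl hg⟩
    rintro j hj y hy
    rcases Finset.mem_insert.1 hj with rfl | hj
    · by_cases hyT : y ∈ T
      · exact hT y hyT
      · exact ⟨1, Or.inr ⟨by rwa [one_smul], by rwa [one_smul]⟩⟩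
    · exact hT y (hScover j hj y hy)

theorem exists_isClopen_fundamentalDomain [Finite G] [CompactSpace Y] [TotallySeparatedSpace Y]
    (hfree : ∀ (g : G) (y : Y), g • y = y → g = 1) :
    ∃ S : Set Y, IsClopen S ∧ MeetsOrbitsAtMostOnce G S ∧ ∀ y : Y, ∃ g : G, g • y ∈ S := by
  choose U hUclopen hyU hUonce using exists_isClopen_mem_meetsOrbitsAtMostOnce hfree
  obtain ⟨t, ht⟩ := isCompact_univ.elim_finite_subcover U (fun y => (hUclopen y).isOpen)
    fun y _ => mem_iUnion.2 ⟨y, hyU y⟩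
  obtain ⟨S, hSclopen, hSonce, hScover⟩ :=
    exists_isClopen_meetsOrbitsAtMostOnce_saturating hUclopen hUonce t
  refine ⟨S, hSclopen, hSonce, fun y => ?_⟩
  obtain ⟨z, hz, hyz⟩ := mem_iUnion₂.1 (ht (mem_univ y))
  exact hScover z hz y hyz

end

theorem exists_continuous_section_of_bijective_domRestrict {X Y : Type*} [TopologicalSpace X]
    [T2Space X] [TopologicalSpace Y] [CompactSpace Y] {f : Y → X} (hf : Continuous f)
    {S : Set Y} (hS : IsClosed S) (hbij : Function.Bijective (S.domRestrict f)) :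
    ∃ s : C(X, Y), ∀ x : X, f (s x) = x := by
  have : CompactSpace S := isCompact_iff_compactSpace.1 hS.isCompact
  let e : S ≃ₜ X := Continuous.homeoOfEquivCompactToT2 (f := Equiv.ofBijective _ hbij)
    (hf.comp continuous_subtype_val)
  exact ⟨⟨fun x => e.symm x, by fun_prop⟩, e.apply_symm_apply⟩

/-- A profinite principal `G`-bundle over a Hausdorff space, with `G` a finite
group, admits a continuous section. -/
theorem finite_principal_bundle_section (G X Y : Type*) [Group G] [Finite G]
    [TopologicalSpace X] [T2Space X] [TopologicalSpace Y] [CompactSpace Y]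
    [T2Space Y] [TotallyDisconnectedSpace Y] [MulAction G Y]
    (hcont : ∀ g : G, Continuous fun y : Y => g • y)
    (hfree : ∀ (g : G) (y : Y), g • y = y → g = 1)
    (f : Y → X) (hf : Continuous f) (hsurj : Function.Surjective f)
    (hinv : ∀ (g : G) (y : Y), f (g • y) = f y)
    (hfib : ∀ y y' : Y, f y = f y' → ∃ g : G, g • y = y') :
    ∃ s : C(X, Y), ∀ x : X, f (s x) = x := by
  have : ContinuousConstSMul G Y := ⟨hcont⟩
  obtain ⟨S, hSclopen, hSonce, hScover⟩ := exists_isClopen_fundamentalDomain hfree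
  refine exists_continuous_section_of_bijective_domRestrict hf hSclopen.isClosed ⟨?_, ?_⟩
  · rintro ⟨p, hp⟩ ⟨q, hq⟩ hpq
    obtain ⟨g, rfl⟩ := hfib p q hpq
    exact Subtype.ext (hSonce g p hp hq).symm
  · intro x
    obtain ⟨y, rfl⟩ := hsurj x
    obtain ⟨g, hg⟩ := hScover y
    exact ⟨⟨g • y, hg⟩, hinv g y⟩
end

section
/- Let f : C → D be a surjective homomorphism of finite groups with D a 2-group, let P ⊆ C be a 2-Sylow subgroup, and let x ∈ C with x² = 1. Then (i) the restriction f|_P : P → D is surjective, and (ii) there exists h ∈ C such that h⁻¹xh ∈ P and f(x) = f(h⁻¹xh). -/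
/-!
Since `D` is a `2`-group and `f` is surjective, `f P` is a Sylow `2`-subgroup of `D`, hence all
of `D`. An involution `x` generates a `2`-subgroup, so some conjugate `g⁻¹xg` lies in `P`;
correcting `g` by an element `c ∈ P` with `f c = f g` makes the conjugator lie in `ker f`.
-/

open Subgroup

theorem IsPGroup.zpowers_of_pow_eq_one {p : ℕ} {G : Type*} [Group G] {x : G} {n : ℕ}
    (hx : x ^ p ^ n = 1) : IsPGroup p (zpowers x) :=
  IsPGroup.of_card_dvd_pow (n := n) (Nat.card_zpowers x ▸ orderOf_dvd_of_pow_eq_one hx)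

theorem Sylow.map_eq_top_of_surjective {p : ℕ} [Fact p.Prime] {G H : Type*} [Group G] [Finite G]
    [Group H] (hH : IsPGroup p H) {f : G →* H} (hf : Function.Surjective f) (P : Sylow p G) :
    (P : Subgroup G).map f = ⊤ :=
  ((P.mapSurjective hf).is_maximal' (hH.of_equiv Subgroup.topEquiv.symm) le_top).symm

theorem Sylow.exists_conj_mem_of_isPGroup_zpowers {p : ℕ} [Fact p.Prime] {G : Type*} [Group G]
    [Finite G] (P : Sylow p G) {x : G} (hx : IsPGroup p (zpowers x)) :
    ∃ g : G, g⁻¹ * x * g ∈ (P : Subgroup G) := by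
  obtain ⟨Q, hxQ⟩ := hx.exists_le_sylow
  obtain ⟨g, rfl⟩ := MulAction.exists_smul_eq G P Q
  refine ⟨g, ?_⟩
  have hxg : x ∈ ((g • P : Sylow p G) : Subgroup G) := hxQ (mem_zpowers x)
  rwa [Sylow.coe_subgroup_smul, mem_pointwise_smul_iff_inv_smul_mem, MulAut.smul_def,
    ← map_inv, MulAut.conj_apply, inv_inv] at hxg

theorem exists_conj_mem_map_eq_of_map_eq_top {G H : Type*} [Group G] [Group H] {f : G →* H}
    {K : Subgroup G} (hK : K.map f = ⊤) {x g : G} (hg : g⁻¹ * x * g ∈ K) :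
    ∃ h : G, h⁻¹ * x * h ∈ K ∧ f x = f (h⁻¹ * x * h) := by
  obtain ⟨c, hc, hcg⟩ : f g ∈ K.map f := hK ▸ mem_top _
  refine ⟨g * c⁻¹, ?_, ?_⟩
  · have hconj : (g * c⁻¹)⁻¹ * x * (g * c⁻¹) = c * (g⁻¹ * x * g) * c⁻¹ := by group
    rw [hconj]
    exact mul_mem (mul_mem hc hg) (inv_mem hc)
  · have hker : f (g * c⁻¹) = 1 := by rw [map_mul, map_inv, hcg, mul_inv_cancel]
    rw [map_mul, map_mul, map_inv, hker, inv_one, one_mul, mul_one]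

theorem sylow_two_lemma_general (C D : Type*) [Group C] [Finite C] [Group D]
    (f : C →* D) (hf : Function.Surjective f) (hD : IsPGroup 2 D)
    (P : Sylow 2 C) (x : C) (hx : x ^ 2 = 1) :
    (∀ d : D, ∃ p ∈ (P : Subgroup C), f p = d) ∧
    (∃ h : C, h⁻¹ * x * h ∈ (P : Subgroup C) ∧ f x = f (h⁻¹ * x * h)) := by
  have hmap : (P : Subgroup C).map f = ⊤ := P.map_eq_top_of_surjective hD hf
  refine ⟨fun d ↦ mem_map.mp (hmap ▸ mem_top d : d ∈ (P : Subgroup C).map f), ?_⟩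
  obtain ⟨g, hg⟩ := P.exists_conj_mem_of_isPGroup_zpowers
    (IsPGroup.zpowers_of_pow_eq_one (n := 1) (by rwa [pow_one]))
  exact exists_conj_mem_map_eq_of_map_eq_top hmap hg

/-- Let `f : C → D` be a surjective homomorphism of finite groups with `D` a
`2`-group, `P` a `2`-Sylow subgroup of `C`, and `x ∈ C` with `x² = 1`.  Then
`f` restricted to `P` is surjective, and `x` has a conjugate `h⁻¹xh ∈ P` with
`f x = f (h⁻¹xh)`. -/
theorem sylow_two_lemma (C D : Type*) [Group C] [Finite C] [Group D] [Finite D]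
    (f : C →* D) (hf : Function.Surjective f) (hD : IsPGroup 2 D)
    (P : Sylow 2 C) (x : C) (hx : x ^ 2 = 1) :
    (∀ d : D, ∃ p ∈ (P : Subgroup C), f p = d) ∧
    (∃ h : C, h⁻¹ * x * h ∈ (P : Subgroup C) ∧ f x = f (h⁻¹ * x * h)) :=
  sylow_two_lemma_general C D f hf hD P x hx
end
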